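/- arXiv:1807.09149 — 3 statements merged into one kernel-verified Lean document; each statement's English description precedes it below -/
import Mathlib

section
/- Let G be a finite graph (1-dimensional simplicial complex) and f a discrete Morse function on G with m₀ critical vertices and m₁ critical edges. Then m₀ ≥ b₀(G) and m₁ ≥ b₁(G), and b₀(G) − b₁(G) = m₀ − m₁, where b_i denotes the i-th Betti number of G. -/
/-- A (flat) discrete Morse function on a graph `G`, given by its values `fv` on
vertices and `fe` on edges: it is monotone, and each value is attained at most
twice, with equal values only on an incident vertex-edge pair. -/
def IsDMF {V : Type*} (G : SimpleGraph V) (fv : V → ℝ) (fe : Sym2 V → ℝ) : Prop :=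
  (∀ v : V, ∀ e ∈ G.edgeSet, v ∈ e → fv v ≤ fe e) ∧
  Function.Injective fv ∧
  (∀ e ∈ G.edgeSet, ∀ e' ∈ G.edgeSet, fe e = fe e' → e = e') ∧
  (∀ v : V, ∀ e ∈ G.edgeSet, fv v = fe e → v ∈ e)

/-- A vertex is critical if no incident edge shares its value. -/
def IsCritVtx {V : Type*} (G : SimpleGraph V) (fv : V → ℝ) (fe : Sym2 V → ℝ)
    (v : V) : Prop :=
  ∀ e ∈ G.edgeSet, v ∈ e → fv v ≠ fe e

/-- An edge is critical if no endpoint shares its value. -/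
def IsCritEdge {V : Type*} (G : SimpleGraph V) (fv : V → ℝ) (fe : Sym2 V → ℝ)
    (e : Sym2 V) : Prop :=
  e ∈ G.edgeSet ∧ ∀ v ∈ e, fv v ≠ fe e

/-- A critical value is a value of a critical simplex. -/
def IsCritValue {V : Type*} (G : SimpleGraph V) (fv : V → ℝ) (fe : Sym2 V → ℝ)
    (x : ℝ) : Prop :=
  (∃ v : V, IsCritVtx G fv fe v ∧ fv v = x) ∨
  (∃ e : Sym2 V, IsCritEdge G fv fe e ∧ fe e = x)

/-- The graph of the level subcomplex at level `a` (edges of value ≤ a). -/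
def levelGraph {V : Type*} (G : SimpleGraph V) (fe : Sym2 V → ℝ) (a : ℝ) :
    SimpleGraph V :=
  SimpleGraph.fromEdgeSet {e | e ∈ G.edgeSet ∧ fe e ≤ a}

/-- The graph of the part of the filtration strictly below level `a`. -/
def levelGraphLt {V : Type*} (G : SimpleGraph V) (fe : Sym2 V → ℝ) (a : ℝ) :
    SimpleGraph V :=
  SimpleGraph.fromEdgeSet {e | e ∈ G.edgeSet ∧ fe e < a}

/-- The homology class born at the critical vertex `v` dies at the critical edge
`e`: just below level `f(e)`, `e` joins two distinct components, `v` is the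
minimum-value vertex of its component, and the other component contains a vertex
of strictly smaller value. -/
def Dies {V : Type*} (G : SimpleGraph V) (fv : V → ℝ) (fe : Sym2 V → ℝ)
    (v : V) (e : Sym2 V) : Prop :=
  ∃ a b : V, e = s(a, b) ∧
    ¬ (levelGraphLt G fe (fe e)).Reachable a b ∧
    (levelGraphLt G fe (fe e)).Reachable a v ∧
    (∀ x : V, (levelGraphLt G fe (fe e)).Reachable a x → fv v ≤ fv x) ∧
    (∃ u : V, (levelGraphLt G fe (fe e)).Reachable b u ∧ fv u < fv v)

/-- The finite part of the degree-0 persistence diagram: pairs (birth, death). -/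
def D0fin {V : Type*} (G : SimpleGraph V) (fv : V → ℝ) (fe : Sym2 V → ℝ) :
    Set (ℝ × ℝ) :=
  {p | ∃ (v : V) (e : Sym2 V), IsCritVtx G fv fe v ∧ IsCritEdge G fv fe e ∧
    fv v = p.1 ∧ fe e = p.2 ∧ Dies G fv fe v e}

/-- Birth times of essential degree-0 classes (components that never die). -/
def D0inf {V : Type*} (G : SimpleGraph V) (fv : V → ℝ) (fe : Sym2 V → ℝ) :
    Set ℝ :=
  {x | ∃ v : V, IsCritVtx G fv fe v ∧ fv v = x ∧ ∀ e : Sym2 V, ¬ Dies G fv fe v e}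

/-- Birth times of degree-1 classes: critical edges that do not merge components. -/
def D1birth {V : Type*} (G : SimpleGraph V) (fv : V → ℝ) (fe : Sym2 V → ℝ) :
    Set ℝ :=
  {x | ∃ e : Sym2 V, IsCritEdge G fv fe e ∧ fe e = x ∧ ¬ ∃ v : V, Dies G fv fe v e}

/-- b₀ of the level subcomplex at `a`: components of the level graph containing a
vertex of value ≤ a. -/
noncomputable def levelB0 {V : Type*} (G : SimpleGraph V) (fv : V → ℝ)
    (fe : Sym2 V → ℝ) (a : ℝ) : ℕ :=
  {C : (levelGraph G fe a).ConnectedComponent |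
    ∃ u : V, fv u ≤ a ∧ (levelGraph G fe a).connectedComponentMk u = C}.ncard

/-- b₁ of the level subcomplex at `a`, via the Euler characteristic. -/
noncomputable def levelB1 {V : Type*} (G : SimpleGraph V) (fv : V → ℝ)
    (fe : Sym2 V → ℝ) (a : ℝ) : ℤ :=
  ({e : Sym2 V | e ∈ G.edgeSet ∧ fe e ≤ a}.ncard : ℤ) -
    ({u : V | fv u ≤ a}.ncard : ℤ) + (levelB0 G fv fe a : ℤ)

/-! The pairs `(v, e)` with `v ∈ e` and `f v = f e` form a matching between the non-critical
vertices and the non-critical edges, because `f` is injective on vertices and on edges; hence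
`m₀ - m₁ = |V| - |E| = b₀ - b₁`. By monotonicity and injectivity, the vertex where `f` is minimal
on a connected component is critical, so `b₀ ≤ m₀`, and then `b₁ = b₀ + m₁ - m₀ ≤ m₁`. -/

section DiscreteMorse

variable {V : Type*} {G : SimpleGraph V} {fv : V → ℝ} {fe : Sym2 V → ℝ}

theorem isCritVtx_of_forall_adj_le
    (hmono : ∀ v : V, ∀ e ∈ G.edgeSet, v ∈ e → fv v ≤ fe e) (hinj : Function.Injective fv)
    {v : V} (hv : ∀ w, G.Adj v w → fv v ≤ fv w) : IsCritVtx G fv fe v := by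
  intro e he hve heq
  obtain ⟨w, rfl⟩ := Sym2.mem_iff_exists.mp hve
  have hadj : G.Adj v w := he
  have hwv : fv w ≤ fv v := heq ▸ hmono w _ he (Sym2.mem_mk_right v w)
  exact hadj.ne (hinj (le_antisymm (hv w hadj) hwv))

theorem exists_isCritVtx_mem_supp [Finite V]
    (hmono : ∀ v : V, ∀ e ∈ G.edgeSet, v ∈ e → fv v ≤ fe e) (hinj : Function.Injective fv)
    (C : G.ConnectedComponent) : ∃ v ∈ C.supp, IsCritVtx G fv fe v := by
  obtain ⟨v, hvC, hmin⟩ := C.supp.exists_min_image fv C.supp.toFinite C.nonempty_supp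
  refine ⟨v, hvC, isCritVtx_of_forall_adj_le hmono hinj fun w hadj => hmin w ?_⟩
  rw [SimpleGraph.ConnectedComponent.mem_supp_iff] at hvC ⊢
  exact (SimpleGraph.ConnectedComponent.connectedComponentMk_eq_of_adj hadj).symm.trans hvC

theorem card_connectedComponent_le_ncard_isCritVtx [Finite V]
    (hmono : ∀ v : V, ∀ e ∈ G.edgeSet, v ∈ e → fv v ≤ fe e) (hinj : Function.Injective fv) :
    Nat.card G.ConnectedComponent ≤ {v : V | IsCritVtx G fv fe v}.ncard := by
  choose crit hcrit_mem hcrit using exists_isCritVtx_mem_supp (fe := fe) hmono hinj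
  rw [← Nat.card_coe_set_eq]
  refine Nat.card_le_card_of_injective (fun C => ⟨crit C, hcrit C⟩) fun C C' h => ?_
  have h' : crit C = crit C' := congrArg Subtype.val h
  rw [← hcrit_mem C, ← hcrit_mem C', h']

variable (G fv fe) in
def IsGradientPair (v : V) (e : Sym2 V) : Prop :=
  e ∈ G.edgeSet ∧ v ∈ e ∧ fv v = fe e

theorem not_isCritVtx_iff {v : V} :
    ¬ IsCritVtx G fv fe v ↔ ∃ e, IsGradientPair G fv fe v e := by
  simp only [IsCritVtx, IsGradientPair, not_forall, not_not, exists_prop]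

theorem mem_edgeSet_diff_isCritEdge_iff {e : Sym2 V} :
    e ∈ G.edgeSet \ {e | IsCritEdge G fv fe e} ↔ ∃ v, IsGradientPair G fv fe v e := by
  simp only [Set.mem_sdiff, Set.mem_ofPred_eq, IsCritEdge, IsGradientPair, not_and, not_forall,
    not_not, exists_prop]
  exact ⟨fun ⟨he, hv⟩ => (hv he).imp fun _ ⟨hve, heq⟩ => ⟨he, hve, heq⟩,
    fun ⟨v, he, hve, heq⟩ => ⟨he, fun _ => ⟨v, hve, heq⟩⟩⟩

theorem ncard_not_isCritVtx_eq_ncard_edgeSet_diff_isCritEdge (hinjv : Function.Injective fv)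
    (hinje : ∀ e ∈ G.edgeSet, ∀ e' ∈ G.edgeSet, fe e = fe e' → e = e') :
    {v : V | ¬ IsCritVtx G fv fe v}.ncard =
      (G.edgeSet \ {e : Sym2 V | IsCritEdge G fv fe e}).ncard := by
  set P := {p : V × Sym2 V | IsGradientPair G fv fe p.1 p.2}
  have hfst : Prod.fst '' P = {v : V | ¬ IsCritVtx G fv fe v} := by
    ext v
    simp [P, not_isCritVtx_iff]
  have hsnd : Prod.snd '' P = G.edgeSet \ {e : Sym2 V | IsCritEdge G fv fe e} := by
    ext e
    rw [mem_edgeSet_diff_isCritEdge_iff]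
    simp [P]
  have hfst_inj : Set.InjOn Prod.fst P := by
    rintro ⟨v, e⟩ ⟨he, -, hve⟩ ⟨v', e'⟩ ⟨he', -, hve'⟩ (rfl : v = v')
    exact Prod.ext rfl (hinje e he e' he' (hve ▸ hve'))
  have hsnd_inj : Set.InjOn Prod.snd P := by
    rintro ⟨v, e⟩ ⟨-, -, hve⟩ ⟨v', e'⟩ ⟨-, -, hve'⟩ (rfl : e = e')
    exact Prod.ext (hinjv (hve.trans hve'.symm)) rfl
  rw [← hfst, ← hsnd, hfst_inj.ncard_image, hsnd_inj.ncard_image]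

theorem ncard_isCritVtx_sub_ncard_isCritEdge [Finite V] (hinjv : Function.Injective fv)
    (hinje : ∀ e ∈ G.edgeSet, ∀ e' ∈ G.edgeSet, fe e = fe e' → e = e') :
    ({v : V | IsCritVtx G fv fe v}.ncard : ℤ) - {e : Sym2 V | IsCritEdge G fv fe e}.ncard =
      Nat.card V - G.edgeSet.ncard := by
  have hV := Set.ncard_add_ncard_compl {v : V | IsCritVtx G fv fe v}
  have hE := Set.ncard_sdiff_add_ncard_of_subset
    (show {e : Sym2 V | IsCritEdge G fv fe e} ⊆ G.edgeSet from fun _ he => he.1)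
  rw [Set.compl_ofPred, ncard_not_isCritVtx_eq_ncard_edgeSet_diff_isCritEdge hinjv hinje] at hV
  omega

end DiscreteMorse

theorem stmt_7_general {V : Type*} [Fintype V] (G : SimpleGraph V)
    [DecidableRel G.Adj] (fv : V → ℝ) (fe : Sym2 V → ℝ) (hf : IsDMF G fv fe)
    (m0 m1 b0 : ℕ) (b1 : ℤ)
    (hm0 : m0 = {v : V | IsCritVtx G fv fe v}.ncard)
    (hm1 : m1 = {e : Sym2 V | IsCritEdge G fv fe e}.ncard)
    (hb0 : b0 = Nat.card G.ConnectedComponent)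
    (hb1 : b1 = (G.edgeFinset.card : ℤ) - (Fintype.card V : ℤ) + (b0 : ℤ)) :
    b0 ≤ m0 ∧ b1 ≤ (m1 : ℤ) ∧ (b0 : ℤ) - b1 = (m0 : ℤ) - (m1 : ℤ) := by
  obtain ⟨hmono, hinjv, hinje, -⟩ := hf
  have hb0_le : b0 ≤ m0 := hb0 ▸ hm0 ▸ card_connectedComponent_le_ncard_isCritVtx hmono hinjv
  have hχ := ncard_isCritVtx_sub_ncard_isCritEdge hinjv hinje
  rw [← hm0, ← hm1, Nat.card_eq_fintype_card, ← SimpleGraph.coe_edgeFinset,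
    Set.ncard_coe_finset] at hχ
  exact ⟨hb0_le, by omega, by omega⟩

/-- Weak discrete Morse inequalities for graphs: m₀ ≥ b₀, m₁ ≥ b₁,
and b₀ - b₁ = m₀ - m₁. -/
theorem stmt_7 {V : Type*} [Fintype V] [DecidableEq V] (G : SimpleGraph V)
    [DecidableRel G.Adj] (fv : V → ℝ) (fe : Sym2 V → ℝ) (hf : IsDMF G fv fe)
    (m0 m1 b0 : ℕ) (b1 : ℤ)
    (hm0 : m0 = {v : V | IsCritVtx G fv fe v}.ncard)
    (hm1 : m1 = {e : Sym2 V | IsCritEdge G fv fe e}.ncard)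
    (hb0 : b0 = Nat.card G.ConnectedComponent)
    (hb1 : b1 = (G.edgeFinset.card : ℤ) - (Fintype.card V : ℤ) + (b0 : ℤ)) :
    b0 ≤ m0 ∧ b1 ≤ (m1 : ℤ) ∧ (b0 : ℤ) - b1 = (m0 : ℤ) - (m1 : ℤ) :=
  stmt_7_general G fv fe hf m0 m1 b0 b1 hm0 hm1 hb0 hb1
end

section
/- Let f be a discrete Morse function on a finite connected tree T with level subcomplex filtration indexed by the critical values c₀ < c₁ < ⋯ < c_{m−1}. A vertex v gives a new connected component at level c_i (i.e., v is in no component of T_{c_i} that meets T_{c_{i−1}}) if and only if v is a critical vertex with f(v) = c_i. -/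
/-!
A vertex of minimal value in a component of the sublevel graph `T_a` is critical: an edge
paired with it would lie in `T_a` and lead to a vertex of no larger value. If `v` is born at
`c`, such a minimum lies in `(b, c]`, so by consecutiveness its value is `c`, and it is `v`
since `fv v ≤ c` and `fv` is injective. Conversely, every edge at a critical vertex `v` has
value `> fv v`, so `v` is isolated in `T_{fv v}`.
-/

theorem levelGraph_adj {V : Type*} {G : SimpleGraph V} {fe : Sym2 V → ℝ} {a : ℝ} {x y : V} :
    (levelGraph G fe a).Adj x y ↔ G.Adj x y ∧ fe s(x, y) ≤ a := by
  simp only [levelGraph, SimpleGraph.fromEdgeSet_adj, Set.mem_ofPred_eq,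
    SimpleGraph.mem_edgeSet]
  exact ⟨fun h => h.1, fun h => ⟨h, h.1.ne⟩⟩

namespace IsDMF

variable {V : Type*} {G : SimpleGraph V} {fv : V → ℝ} {fe : Sym2 V → ℝ}

theorem eq_of_reachable_levelGraph_of_isCritVtx (hf : IsDMF G fv fe) {v u : V}
    (hv : IsCritVtx G fv fe v) (hvu : (levelGraph G fe (fv v)).Reachable v u) : u = v := by
  obtain ⟨p⟩ := hvu
  cases p with
  | nil => rfl
  | @cons _ w _ hadj _ =>
    obtain ⟨hG, hle⟩ := levelGraph_adj.mp hadj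
    have hge := hf.1 v _ hG (Sym2.mem_mk_left v w)
    exact absurd (le_antisymm hge hle) (hv _ hG (Sym2.mem_mk_left v w))

theorem isCritVtx_of_forall_reachable_le (hf : IsDMF G fv fe) {a : ℝ} {u : V}
    (hua : fv u ≤ a) (hmin : ∀ w, (levelGraph G fe a).Reachable u w → fv u ≤ fv w) :
    IsCritVtx G fv fe u := by
  intro e he hue hval
  obtain ⟨w, rfl⟩ := Sym2.mem_iff_exists.mp hue
  have hG : G.Adj u w := he
  have hreach : (levelGraph G fe a).Reachable u w :=
    (levelGraph_adj.mpr ⟨hG, hval ▸ hua⟩).reachable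
  have hwu : fv w ≤ fv u := hval ▸ hf.1 w _ he (Sym2.mem_mk_right u w)
  exact hG.ne (hf.2.1 (le_antisymm (hmin w hreach) hwu))

theorem exists_isCritVtx_reachable_levelGraph [Finite V] (hf : IsDMF G fv fe) {a : ℝ}
    {v : V} (hva : fv v ≤ a) :
    ∃ u, (levelGraph G fe a).Reachable v u ∧ IsCritVtx G fv fe u ∧ fv u ≤ fv v := by
  obtain ⟨u, hvu, hmin⟩ := Set.exists_min_image {u | (levelGraph G fe a).Reachable v u} fv
    (Set.toFinite _) ⟨v, .refl v⟩
  have huv : fv u ≤ fv v := hmin v (.refl v)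
  exact ⟨u, hvu, isCritVtx_of_forall_reachable_le hf (huv.trans hva)
    fun w huw => hmin w (hvu.trans huw), huv⟩

end IsDMF

theorem stmt_14_general {V : Type*} [Fintype V] (T : SimpleGraph V)
    (fv : V → ℝ) (fe : Sym2 V → ℝ) (hf : IsDMF T fv fe)
    (b c : ℝ)
    (hbc : b < c)
    (hconsec : ∀ x : ℝ, IsCritValue T fv fe x → ¬ (b < x ∧ x < c)) (v : V) :
    (fv v ≤ c ∧ ∀ u : V, (levelGraph T fe c).Reachable v u → b < fv u) ↔
      (IsCritVtx T fv fe v ∧ fv v = c) := by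
  constructor
  · rintro ⟨hvc, hborn⟩
    obtain ⟨u, hvu, hu, huv⟩ := hf.exists_isCritVtx_reachable_levelGraph hvc
    have hcu : c ≤ fv u := not_lt.mp fun huc =>
      hconsec (fv u) (.inl ⟨u, hu, rfl⟩) ⟨hborn u hvu, huc⟩
    obtain rfl : v = u := hf.2.1 (le_antisymm (hvc.trans hcu) huv)
    exact ⟨hu, le_antisymm hvc hcu⟩
  · rintro ⟨hv, rfl⟩
    refine ⟨le_rfl, fun u hu => ?_⟩
    rw [hf.eq_of_reachable_levelGraph_of_isCritVtx hv hu]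
    exact hbc

/-- For consecutive critical values b < c of a discrete Morse function
on a tree, a vertex v is born at level c (it lies in T_c and its connected
component in T_c contains no simplex of T_b) iff v is a critical vertex with
f(v) = c. -/
theorem stmt_14 {V : Type*} [Fintype V] (T : SimpleGraph V) (hT : T.IsTree)
    (fv : V → ℝ) (fe : Sym2 V → ℝ) (hf : IsDMF T fv fe)
    (b c : ℝ) (hbcrit : IsCritValue T fv fe b) (hccrit : IsCritValue T fv fe c)
    (hbc : b < c)
    (hconsec : ∀ x : ℝ, IsCritValue T fv fe x → ¬ (b < x ∧ x < c)) (v : V) :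
    (fv v ≤ c ∧ ∀ u : V, (levelGraph T fe c).Reachable v u → b < fv u) ↔
      (IsCritVtx T fv fe v ∧ fv v = c) :=
  stmt_14_general T fv fe hf b c hbc hconsec v
end

section
/- Let T be a finite tree on n simplices and let D be any persistence diagram consistent with T. Then there exists a discrete Morse function f: T → [0, n] whose induced persistence diagram equals D. Consequently, the upper bound (n−1)(n−2)⋯(n−2k)/(2^k k!) on the number of persistence equivalence classes of discrete Morse functions with m = 2k+1 critical values on T is attained. -/
/-!
Root the tree and enumerate its vertices so that every vertex comes after its parent, and list the
pairs of `D` by increasing birth. The `i`-th non-root vertex, for `i ≤ #D`, is born at the `i`-th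
birth and is killed by the edge to its parent at the `i`-th death; every later vertex is paired with
its parent edge at a common non-integer value in `(n - 1, n)`. Vertex values then increase away from
the root, so just below the value of the parent edge of `w` the component of `w` is the subtree
below `w`, whose oldest vertex is `w`: each critical vertex dies exactly at its parent edge.
-/

open SimpleGraph Set Function

def IsDescendant {V : Type*} (P : V → V) (w x : V) : Prop := ∃ m, P^[m] x = w

namespace IsDescendant

variable {V : Type*} {P : V → V} {w x y : V}

lemma refl : IsDescendant P w w := ⟨0, rfl⟩

lemma of_parent_eq (hx : IsDescendant P w x) (hy : P y = x) : IsDescendant P w y := by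
  obtain ⟨m, hm⟩ := hx
  exact ⟨m + 1, by rw [iterate_succ_apply, hy, hm]⟩

lemma parent (hx : IsDescendant P w x) (hxw : x ≠ w) : IsDescendant P w (P x) := by
  obtain ⟨_ | m, hm⟩ := hx
  · exact absurd hm hxw
  · exact ⟨m, by rwa [← iterate_succ_apply]⟩

lemma apply_le_apply {α : Type*} [Preorder α] {f : V → α} (hf : ∀ z, f (P z) ≤ f z)
    (hx : IsDescendant P w x) : f w ≤ f x := by
  obtain ⟨m, rfl⟩ := hx
  induction m generalizing x with
  | zero => exact le_rfl
  | succ m ih => exact (ih (x := P x)).trans (hf x)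

lemma of_reachable {H : SimpleGraph V} (hH : ∀ x y, H.Adj x y → x = P y ∨ y = P x)
    (hw : ¬ H.Adj w (P w)) (hxy : H.Reachable x y) (hx : IsDescendant P w x) :
    IsDescendant P w y := by
  rw [reachable_iff_reflTransGen] at hxy
  induction hxy with
  | refl => exact hx
  | tail _ hadj ih =>
    rcases hH _ _ hadj with rfl | rfl
    · exact ih.of_parent_eq rfl
    · exact ih.parent (by rintro rfl; exact hw hadj)

end IsDescendant

section LevelGraph

variable {V : Type*} {T : SimpleGraph V} {fv : V → ℝ} {fe : Sym2 V → ℝ} {a : ℝ} {x y : V}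

lemma levelGraphLt_adj : (levelGraphLt T fe a).Adj x y ↔ T.Adj x y ∧ fe s(x, y) < a := by
  simp only [levelGraphLt, fromEdgeSet_adj, Set.mem_ofPred_eq, mem_edgeSet]
  exact ⟨fun h => h.1, fun h => ⟨h, h.1.ne⟩⟩

lemma not_levelGraphLt_adj_of_le (h : a ≤ fe s(x, y)) : ¬ (levelGraphLt T fe a).Adj x y :=
  fun hxy => (levelGraphLt_adj.1 hxy).2.not_ge h

variable {P : V → V}

lemma dies_parent_edge (hP : ∀ x y, T.Adj x y → x = P y ∨ y = P x)
    (hmono : ∀ z, fv (P z) ≤ fv z) {w : V} (hlt : fv (P w) < fv w) :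
    Dies T fv fe w s(P w, w) := by
  have hmin : ∀ x, (levelGraphLt T fe (fe s(P w, w))).Reachable w x → fv w ≤ fv x :=
    fun x hx => (IsDescendant.refl.of_reachable (fun x y h => hP x y (levelGraphLt_adj.1 h).1)
      (not_levelGraphLt_adj_of_le (Sym2.eq_swap ▸ le_rfl)) hx).apply_le_apply hmono
  exact ⟨w, P w, Sym2.eq_swap, fun h => (hmin _ h).not_gt hlt, .refl _, hmin, P w, .refl _, hlt⟩

/-- If `e` comes after the parent edge of `v`, the older vertex `P v` lies in the component of `v`.
Otherwise that component, and the one across `e`, stay in the subtree below `v`, where no vertex is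
older than `v`. -/
lemma eq_parent_edge_of_dies (hP : ∀ x y, T.Adj x y → x = P y ∨ y = P x)
    (hmono : ∀ z, fv (P z) ≤ fv z) {v : V} {e : Sym2 V} (hadj : T.Adj (P v) v)
    (hlt : fv (P v) < fv v) (he : e ∈ T.edgeSet) (hd : Dies T fv fe v e) :
    e = s(P v, v) := by
  obtain ⟨a, b, rfl, -, hav, hmin, u, hbu, hu⟩ := hd
  by_contra hne
  rcases lt_or_ge (fe s(P v, v)) (fe s(a, b)) with hlow | hhigh
  · have hvP : (levelGraphLt T fe (fe s(a, b))).Adj v (P v) :=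
      levelGraphLt_adj.2 ⟨hadj.symm, by rwa [Sym2.eq_swap (a := v)]⟩
    exact (hmin _ (hav.trans hvP.reachable)).not_gt hlt
  · have hsub : ∀ {x y}, (levelGraphLt T fe (fe s(a, b))).Reachable x y →
        IsDescendant P v x → IsDescendant P v y :=
      IsDescendant.of_reachable (fun x y h => hP x y (levelGraphLt_adj.1 h).1)
        (not_levelGraphLt_adj_of_le (by rwa [Sym2.eq_swap (a := v)]))
    have ha : IsDescendant P v a := hsub hav.symm .refl
    have hb : IsDescendant P v b := by
      rcases hP a b he with rfl | rfl
      · exact ha.of_parent_eq rfl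
      · exact ha.parent (by rintro rfl; exact hne Sym2.eq_swap)
    exact ((hsub hbu hb).apply_le_apply hmono).not_gt hu

end LevelGraph

structure ParentEnumeration {V : Type*} (T : SimpleGraph V) where
  idx : V → ℕ
  parent : V → V
  idx_injective : Injective idx
  parent_eq_self : ∀ w, idx w = 0 → parent w = w
  adj_parent : ∀ w, idx w ≠ 0 → T.Adj (parent w) w
  idx_parent_lt : ∀ w, idx w ≠ 0 → idx (parent w) < idx w
  eq_parent_or_eq_parent : ∀ x y, T.Adj x y → x = parent y ∨ y = parent x

lemma Fintype.exists_equivFin_lt_of_lt {V : Type*} [Fintype V] (f : V → ℕ) :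
    ∃ e : V ≃ Fin (Fintype.card V), ∀ x y, f x < f y → e x < e y := by
  let key : V → ℕ ×ₗ Fin (Fintype.card V) := fun v => toLex (f v, Fintype.equivFin V v)
  have hkey : Injective key := fun a b h =>
    (Fintype.equivFin V).injective (congrArg (fun q => (ofLex q).2) h)
  let _ : LinearOrder V := LinearOrder.lift' key hkey
  exact ⟨(Fintype.orderIsoFinOfCardEq V rfl).symm.toEquiv, fun x y h =>
    (Fintype.orderIsoFinOfCardEq V rfl).symm.strictMono
      (show key x < key y from Prod.Lex.toLex_lt_toLex.2 (Or.inl h))⟩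

/-- Enumerate by distance to a root `r`, and let the parent of `w ≠ r` be the second vertex of
the unique path from `w` to `r`. -/
theorem SimpleGraph.IsTree.exists_parentEnumeration {V : Type*} [Fintype V] {T : SimpleGraph V}
    (hT : T.IsTree) : ∃ E : ParentEnumeration T, ∀ i < Fintype.card V, ∃ w, E.idx w = i := by
  obtain ⟨r⟩ := hT.connected.nonempty
  choose pth hpth hpth_unique using fun w => hT.existsUnique_path w r
  have hroot : pth r = Walk.nil := (hpth_unique r .nil .nil).symm
  have hlen : ∀ w, w ≠ r → (pth (pth w).snd).length + 1 = (pth w).length := fun w hw => by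
    rw [← hpth_unique _ _ (hpth w).tail, Walk.length_tail_add_one (fun h => hw h.eq)]
  obtain ⟨e, he⟩ := Fintype.exists_equivFin_lt_of_lt fun w => (pth w).length
  have hlt_root : ∀ w, w ≠ r → e r < e w := fun w hw =>
    he r w (by rw [hroot, Walk.length_nil, ← hlen w hw]; omega)
  have hidx : ∀ w, (e w : ℕ) = 0 ↔ w = r := by
    have h0 : (e r : ℕ) = 0 := by
      by_contra h
      have hne : e.symm ⟨0, Fintype.card_pos_iff.2 ⟨r⟩⟩ ≠ r := fun h' => h (by simp [← h'])
      simpa [Fin.lt_def] using hlt_root _ hne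
    refine fun w => ⟨fun hw => by_contra fun hne => ?_, fun hw => hw ▸ h0⟩
    simpa [Fin.lt_def, hw, h0] using hlt_root w hne
  refine ⟨⟨fun w => e w, fun w => (pth w).snd, ?_, ?_, ?_, ?_, ?_⟩,
    fun i hi => ⟨e.symm ⟨i, hi⟩, by simp⟩⟩
  · exact Fin.val_injective.comp e.injective
  · intro w hw
    rw [(hidx w).1 hw, hroot]
    rfl
  · intro w hw
    exact (Walk.adj_snd fun h => (mt (hidx w).2 hw) h.eq).symm
  · intro w hw
    exact he _ _ (by rw [← hlen w (mt (hidx w).2 hw)]; omega)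
  · intro x y hxy
    by_cases hy : y ∈ (pth x).support
    · exact .inr (hT.isAcyclic.eq_snd_of_adj_start (hpth x) hxy hy)
    · left
      rw [← hpth_unique y _ ((hpth x).cons (h := hxy.symm) hy), Walk.snd_cons]

namespace ParentEnumeration

variable {V : Type*} {T : SimpleGraph V} (E : ParentEnumeration T)

lemma idx_parent_le (w : V) : E.idx (E.parent w) ≤ E.idx w := by
  by_cases hw : E.idx w = 0
  · rw [E.parent_eq_self w hw]
  · exact (E.idx_parent_lt w hw).le

lemma exists_eq_parent_edge {e : Sym2 V} (he : e ∈ T.edgeSet) :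
    ∃ z, E.idx z ≠ 0 ∧ e = s(E.parent z, z) := by
  induction e using Sym2.ind with | _ x y => ?_
  rcases E.eq_parent_or_eq_parent x y he with rfl | rfl
  · exact ⟨y, fun hy => he.ne (E.parent_eq_self y hy), rfl⟩
  · exact ⟨x, fun hx => he.ne (E.parent_eq_self x hx).symm, Sym2.eq_swap⟩

def vertexFn (μ : ℕ → ℝ) (w : V) : ℝ := μ (E.idx w)

/-- On a tree edge, `max` picks the index of the child. -/
def edgeFn (ν : ℕ → ℝ) : Sym2 V → ℝ :=
  Sym2.lift ⟨fun x y => ν (max (E.idx x) (E.idx y)), fun x y => by simp only [max_comm]⟩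

variable {μ ν : ℕ → ℝ}

lemma edgeFn_parent {z : V} (hz : E.idx z ≠ 0) :
    E.edgeFn ν s(E.parent z, z) = ν (E.idx z) := by
  simp [edgeFn, (E.idx_parent_lt z hz).le]

lemma isDMF (hμ : StrictMono μ) (hμν : ∀ i, i ≠ 0 → μ i ≤ ν i) (hν : InjOn ν {0}ᶜ)
    (hμν_eq : ∀ i j, j ≠ 0 → μ i = ν j → i = j) : IsDMF T (E.vertexFn μ) (E.edgeFn ν) := by
  refine ⟨fun v e he hv => ?_, hμ.injective.comp E.idx_injective, fun e he e' he' h => ?_,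
    fun v e he h => ?_⟩
  · obtain ⟨z, hz, rfl⟩ := E.exists_eq_parent_edge he
    rw [E.edgeFn_parent hz]
    refine (hμ.monotone ?_).trans (hμν _ hz)
    rcases Sym2.mem_iff.1 hv with rfl | rfl
    exacts [E.idx_parent_le z, le_rfl]
  · obtain ⟨z, hz, rfl⟩ := E.exists_eq_parent_edge he
    obtain ⟨z', hz', rfl⟩ := E.exists_eq_parent_edge he'
    rw [E.edgeFn_parent hz, E.edgeFn_parent hz'] at h
    rw [E.idx_injective (hν hz hz' h)]
  · obtain ⟨z, hz, rfl⟩ := E.exists_eq_parent_edge he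
    rw [E.edgeFn_parent hz] at h
    rw [E.idx_injective (hμν_eq _ _ hz h)]
    exact Sym2.mem_mk_right _ _

lemma isCritVtx_iff (hμν_eq : ∀ i j, j ≠ 0 → μ i = ν j → i = j) {v : V} :
    IsCritVtx T (E.vertexFn μ) (E.edgeFn ν) v ↔ E.idx v = 0 ∨ μ (E.idx v) ≠ ν (E.idx v) := by
  refine ⟨fun h => ?_, fun h e he hv hval => ?_⟩
  · by_contra! hc
    exact h _ (E.adj_parent v hc.1) (Sym2.mem_mk_right _ _)
      (by rw [E.edgeFn_parent hc.1]; exact hc.2)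
  · obtain ⟨z, hz, rfl⟩ := E.exists_eq_parent_edge he
    rw [E.edgeFn_parent hz] at hval
    obtain rfl := E.idx_injective (hμν_eq _ _ hz hval)
    exact h.elim hz (· hval)

lemma isCritEdge_parent_iff (hμν_eq : ∀ i j, j ≠ 0 → μ i = ν j → i = j) {z : V}
    (hz : E.idx z ≠ 0) :
    IsCritEdge T (E.vertexFn μ) (E.edgeFn ν) s(E.parent z, z) ↔ μ (E.idx z) ≠ ν (E.idx z) := by
  rw [IsCritEdge, E.edgeFn_parent hz]
  refine ⟨fun h => h.2 z (Sym2.mem_mk_right _ _), fun h => ⟨E.adj_parent z hz, fun u hu => ?_⟩⟩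
  rcases Sym2.mem_iff.1 hu with rfl | rfl
  · exact fun hval => (E.idx_parent_lt z hz).ne (hμν_eq _ _ hz hval)
  · exact h

lemma dies_iff (hμ : StrictMono μ) {fe : Sym2 V → ℝ} {v : V} {e : Sym2 V}
    (he : e ∈ T.edgeSet) :
    Dies T (E.vertexFn μ) fe v e ↔ E.idx v ≠ 0 ∧ e = s(E.parent v, v) := by
  have hmono : ∀ z, E.vertexFn μ (E.parent z) ≤ E.vertexFn μ z :=
    fun z => hμ.monotone (E.idx_parent_le z)
  have hlt : ∀ w, E.idx w ≠ 0 → E.vertexFn μ (E.parent w) < E.vertexFn μ w :=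
    fun w hw => hμ (E.idx_parent_lt w hw)
  refine ⟨fun hd => ?_,
    fun ⟨hv, he⟩ => he ▸ dies_parent_edge E.eq_parent_or_eq_parent hmono (hlt v hv)⟩
  have hv : E.idx v ≠ 0 := by
    obtain ⟨-, -, -, -, -, -, u, -, hu⟩ := hd
    exact fun h0 => (hμ.monotone (Nat.zero_le (E.idx u))).not_gt (h0 ▸ hu)
  exact ⟨hv, eq_parent_edge_of_dies E.eq_parent_or_eq_parent hmono (E.adj_parent v hv)
    (hlt v hv) he hd⟩

end ParentEnumeration

noncomputable def pairedValue (n i : ℕ) : ℝ := n - 1 / ((i : ℝ) + 1)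

lemma pairedValue_lt (n i : ℕ) : pairedValue n i < n := by
  have : (0 : ℝ) < 1 / ((i : ℝ) + 1) := by positivity
  unfold pairedValue
  linarith

lemma sub_one_lt_pairedValue (n : ℕ) {i : ℕ} (hi : i ≠ 0) : (n : ℝ) - 1 < pairedValue n i := by
  have : 1 / ((i : ℝ) + 1) < 1 := by
    rw [div_lt_one (by positivity)]
    exact_mod_cast Nat.lt_succ_of_le (Nat.one_le_iff_ne_zero.2 hi)
  unfold pairedValue
  linarith

lemma pairedValue_strictMono (n : ℕ) : StrictMono (pairedValue n) := fun i j hij => by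
  unfold pairedValue
  gcongr

lemma natCast_lt_pairedValue {m n i : ℕ} (hm : m < n) (hi : i ≠ 0) :
    (m : ℝ) < pairedValue n i := by
  have : (m : ℝ) + 1 ≤ n := by exact_mod_cast hm
  linarith [sub_one_lt_pairedValue n hi]

lemma pairedValue_ne_natCast {n i : ℕ} (hi : i ≠ 0) (m : ℕ) : pairedValue n i ≠ m := by
  intro h
  have hmn : m < n := by exact_mod_cast h ▸ pairedValue_lt n i
  exact (natCast_lt_pairedValue hmn hi).ne' h

/-- The diagram `{((p i).1, (p i).2) | 1 ≤ i ≤ k}` with values in `[1, n]`, listed by increasing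
birth. -/
structure IsSortedDiagram (n k : ℕ) (p : ℕ → ℕ × ℕ) : Prop where
  one_le_fst : ∀ i ∈ Icc 1 k, 1 ≤ (p i).1
  fst_lt_snd : ∀ i ∈ Icc 1 k, (p i).1 < (p i).2
  snd_le : ∀ i ∈ Icc 1 k, (p i).2 ≤ n
  strictMonoOn_fst : StrictMonoOn (fun i => (p i).1) (Icc 1 k)
  fst_ne_snd : ∀ i ∈ Icc 1 k, ∀ j ∈ Icc 1 k, (p i).1 ≠ (p j).2
  injOn_snd : InjOn (fun i => (p i).2) (Icc 1 k)

noncomputable def vertexValue (n k : ℕ) (p : ℕ → ℕ × ℕ) (i : ℕ) : ℝ :=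
  if i = 0 then 0 else if i ≤ k then ((p i).1 : ℝ) else pairedValue n i

noncomputable def edgeValue (n k : ℕ) (p : ℕ → ℕ × ℕ) (i : ℕ) : ℝ :=
  if i ≤ k then ((p i).2 : ℝ) else pairedValue n i

section Values

variable {n k i : ℕ} {p : ℕ → ℕ × ℕ}

@[simp] lemma vertexValue_zero : vertexValue n k p 0 = 0 := if_pos rfl

lemma vertexValue_of_mem (hi : i ∈ Icc 1 k) : vertexValue n k p i = (p i).1 := by
  rw [vertexValue, if_neg (by grind), if_pos hi.2]

lemma vertexValue_of_lt (hi : k < i) : vertexValue n k p i = pairedValue n i := by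
  rw [vertexValue, if_neg (by omega), if_neg (by omega)]

lemma edgeValue_of_le (hi : i ≤ k) : edgeValue n k p i = (p i).2 := if_pos hi

lemma edgeValue_of_lt (hi : k < i) : edgeValue n k p i = pairedValue n i := if_neg (by omega)

lemma exists_natCast_vertexValue (hi : i ≤ k) : ∃ m : ℕ, vertexValue n k p i = m := by
  rcases eq_or_ne i 0 with rfl | hi0
  · exact ⟨0, by simp⟩
  · exact ⟨(p i).1, vertexValue_of_mem ⟨Nat.one_le_iff_ne_zero.2 hi0, hi⟩⟩

namespace IsSortedDiagram

lemma vertexValue_strictMono (hp : IsSortedDiagram n k p) (hn : n ≠ 0) :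
    StrictMono (vertexValue n k p) := by
  intro i j hij
  rcases le_or_gt j k with hjk | hjk
  · have hj : j ∈ Icc 1 k := ⟨by omega, hjk⟩
    rw [vertexValue_of_mem hj]
    rcases eq_or_ne i 0 with rfl | hi0
    · rw [vertexValue_zero]
      exact_mod_cast hp.one_le_fst j hj
    · rw [vertexValue_of_mem ⟨by omega, by omega⟩]
      exact_mod_cast hp.strictMonoOn_fst ⟨by omega, by omega⟩ hj hij
  · rw [vertexValue_of_lt hjk]
    rcases le_or_gt i k with hik | hik
    · rcases eq_or_ne i 0 with rfl | hi0
      · simpa using natCast_lt_pairedValue (Nat.pos_of_ne_zero hn) (by omega : j ≠ 0)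
      · have hi : i ∈ Icc 1 k := ⟨by omega, hik⟩
        rw [vertexValue_of_mem hi]
        exact natCast_lt_pairedValue ((hp.fst_lt_snd i hi).trans_le (hp.snd_le i hi)) (by omega)
    · rw [vertexValue_of_lt hik]
      exact pairedValue_strictMono n hij

lemma vertexValue_le_edgeValue (hp : IsSortedDiagram n k p) :
    ∀ i, i ≠ 0 → vertexValue n k p i ≤ edgeValue n k p i := by
  intro i hi
  rcases le_or_gt i k with hik | hik
  · have hi : i ∈ Icc 1 k := ⟨by omega, hik⟩
    rw [vertexValue_of_mem hi, edgeValue_of_le hik]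
    exact_mod_cast (hp.fst_lt_snd i hi).le
  · rw [vertexValue_of_lt hik, edgeValue_of_lt hik]

lemma eq_of_vertexValue_eq_edgeValue (hp : IsSortedDiagram n k p) :
    ∀ i j, j ≠ 0 → vertexValue n k p i = edgeValue n k p j → i = j := by
  intro i j hj h
  rcases le_or_gt j k with hjk | hjk
  · have hj : j ∈ Icc 1 k := ⟨by omega, hjk⟩
    rw [edgeValue_of_le hjk] at h
    rcases le_or_gt i k with hik | hik
    · exfalso
      rcases eq_or_ne i 0 with rfl | hi0
      · have := hp.fst_lt_snd j hj
        have : (p j).2 = 0 := by exact_mod_cast (vertexValue_zero (n := n) ▸ h).symm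
        omega
      · rw [vertexValue_of_mem ⟨by omega, hik⟩] at h
        exact hp.fst_ne_snd i ⟨by omega, hik⟩ j hj (by exact_mod_cast h)
    · rw [vertexValue_of_lt hik] at h
      exact absurd h (pairedValue_ne_natCast (by omega) _)
  · rw [edgeValue_of_lt hjk] at h
    rcases le_or_gt i k with hik | hik
    · obtain ⟨m, hm⟩ := exists_natCast_vertexValue (n := n) (p := p) hik
      exact absurd (hm ▸ h).symm (pairedValue_ne_natCast (by omega) m)
    · rw [vertexValue_of_lt hik] at h
      exact (pairedValue_strictMono n).injective h

lemma edgeValue_injOn (hp : IsSortedDiagram n k p) : InjOn (edgeValue n k p) {0}ᶜ := by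
  intro i hi j hj h
  simp only [mem_compl_iff, mem_singleton_iff] at hi hj
  rcases le_or_gt i k with hik | hik <;> rcases le_or_gt j k with hjk | hjk
  · rw [edgeValue_of_le hik, edgeValue_of_le hjk] at h
    exact hp.injOn_snd ⟨by omega, hik⟩ ⟨by omega, hjk⟩ (by exact_mod_cast h)
  · rw [edgeValue_of_le hik, edgeValue_of_lt hjk] at h
    exact absurd h.symm (pairedValue_ne_natCast hj _)
  · rw [edgeValue_of_lt hik, edgeValue_of_le hjk] at h
    exact absurd h (pairedValue_ne_natCast hi _)
  · rw [edgeValue_of_lt hik, edgeValue_of_lt hjk] at h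
    exact (pairedValue_strictMono n).injective h

lemma edgeValue_le (hp : IsSortedDiagram n k p) (hi : i ≠ 0) : edgeValue n k p i ≤ n := by
  rcases le_or_gt i k with hik | hik
  · rw [edgeValue_of_le hik]
    exact_mod_cast hp.snd_le i ⟨by omega, hik⟩
  · rw [edgeValue_of_lt hik]
    exact (pairedValue_lt n i).le

lemma vertexValue_ne_edgeValue_iff (hp : IsSortedDiagram n k p) (hi : i ≠ 0) :
    vertexValue n k p i ≠ edgeValue n k p i ↔ i ≤ k := by
  rcases le_or_gt i k with hik | hik
  · have hi : i ∈ Icc 1 k := ⟨by omega, hik⟩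
    simp only [vertexValue_of_mem hi, edgeValue_of_le hik, hik, iff_true, ne_eq, Nat.cast_inj]
    exact (hp.fst_lt_snd i hi).ne
  · simp [vertexValue_of_lt hik, edgeValue_of_lt hik, hik]

end IsSortedDiagram

end Values

lemma exists_sorted_enumeration (D : Finset (ℕ × ℕ))
    (hD : InjOn Prod.fst (D : Set (ℕ × ℕ))) :
    ∃ p : ℕ → ℕ × ℕ, MapsTo p (Icc 1 D.card) D ∧ SurjOn p (Icc 1 D.card) D ∧
      StrictMonoOn (fun i => (p i).1) (Icc 1 D.card) := by
  set F := D.image Prod.fst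
  have hf : (Set.ofPred (· ∈ F)).Finite := F.finite_toSet
  have hcard : hf.toFinset.card = D.card := by
    simpa using Finset.card_image_of_injOn hD
  have hτ : ∀ i ∈ Icc 1 D.card, ∃ a ∈ (D : Set (ℕ × ℕ)), a.1 = Nat.nth (· ∈ F) (i - 1) :=
    fun i hi => by
      simpa [F] using Nat.nth_mem_of_lt_card hf (by grind : i - 1 < hf.toFinset.card)
  refine ⟨fun i => invFunOn Prod.fst D (Nat.nth (· ∈ F) (i - 1)),
    fun i hi => invFunOn_mem (hτ i hi), fun q hq => ?_, fun i hi j hj hij => ?_⟩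
  · obtain ⟨m, hm, hnth⟩ := Nat.exists_lt_card_finite_nth_eq hf (Finset.mem_image_of_mem _ hq)
    have hm1 : m + 1 ∈ Icc 1 D.card := ⟨by omega, by omega⟩
    refine ⟨m + 1, hm1, hD (invFunOn_mem (hτ _ hm1)) hq ?_⟩
    simpa using (invFunOn_eq (hτ _ hm1)).trans hnth
  · simp only [invFunOn_eq (hτ i hi), invFunOn_eq (hτ j hj)]
    exact Nat.nth_strictMonoOn hf (by grind) (by grind) (by grind)

lemma IsSortedDiagram.of_mapsTo {n : ℕ} {D : Finset (ℕ × ℕ)} {p : ℕ → ℕ × ℕ}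
    (hD1 : ∀ p ∈ D, 1 ≤ p.1 ∧ p.2 ≤ n ∧ p.1 < p.2)
    (hD2 : ∀ p ∈ D, ∀ q ∈ D, p ≠ q → p.1 ≠ q.1 ∧ p.1 ≠ q.2 ∧ p.2 ≠ q.1 ∧ p.2 ≠ q.2)
    (hmaps : MapsTo p (Icc 1 D.card) D)
    (hmono : StrictMonoOn (fun i => (p i).1) (Icc 1 D.card)) :
    IsSortedDiagram n D.card p := by
  have hne : ∀ i ∈ Icc 1 D.card, ∀ j ∈ Icc 1 D.card, i ≠ j → p i ≠ p j :=
    fun i hi j hj hij h => hij (hmono.injOn hi hj (congrArg Prod.fst h))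
  refine ⟨fun i hi => (hD1 _ (hmaps hi)).1, fun i hi => (hD1 _ (hmaps hi)).2.2,
    fun i hi => (hD1 _ (hmaps hi)).2.1, hmono, fun i hi j hj => ?_, fun i hi j hj h => ?_⟩
  · rcases eq_or_ne i j with rfl | hij
    · exact (hD1 _ (hmaps hi)).2.2.ne
    · exact (hD2 _ (hmaps hi) _ (hmaps hj) (hne i hi j hj hij)).2.1
  · by_contra hij
    exact (hD2 _ (hmaps hi) _ (hmaps hj) (hne i hi j hj hij)).2.2.2 h

namespace ParentEnumeration

variable {V : Type*} {T : SimpleGraph V} (E : ParentEnumeration T) {n k : ℕ} {p : ℕ → ℕ × ℕ}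

lemma exists_natCast_of_isCritValue (hp : IsSortedDiagram n k p) {x : ℝ}
    (hx : IsCritValue T (E.vertexFn (vertexValue n k p)) (E.edgeFn (edgeValue n k p)) x) :
    ∃ j : ℕ, (j : ℝ) = x := by
  have heq := hp.eq_of_vertexValue_eq_edgeValue
  rcases hx with ⟨v, hv, rfl⟩ | ⟨e, he, rfl⟩
  · have hvk : E.idx v ≤ k := by
      by_cases hv0 : E.idx v = 0
      · omega
      · exact (hp.vertexValue_ne_edgeValue_iff hv0).1
          (((E.isCritVtx_iff heq).1 hv).resolve_left hv0)
    obtain ⟨m, hm⟩ := exists_natCast_vertexValue (n := n) (p := p) hvk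
    exact ⟨m, hm.symm⟩
  · obtain ⟨z, hz, rfl⟩ := E.exists_eq_parent_edge he.1
    have hzk := (hp.vertexValue_ne_edgeValue_iff hz).1 ((E.isCritEdge_parent_iff heq hz).1 he)
    exact ⟨(p (E.idx z)).2, by rw [E.edgeFn_parent hz, edgeValue_of_le hzk]⟩

lemma exists_critical_dies_iff (hp : IsSortedDiagram n k p) (hn : n ≠ 0)
    (hsurj : ∀ i ∈ Icc 1 k, ∃ w, E.idx w = i) (c d : ℕ) :
    (∃ i ∈ Icc 1 k, p i = (c, d)) ↔
      ∃ (v : V) (e : Sym2 V),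
        IsCritVtx T (E.vertexFn (vertexValue n k p)) (E.edgeFn (edgeValue n k p)) v ∧
        IsCritEdge T (E.vertexFn (vertexValue n k p)) (E.edgeFn (edgeValue n k p)) e ∧
        E.vertexFn (vertexValue n k p) v = c ∧ E.edgeFn (edgeValue n k p) e = d ∧
        Dies T (E.vertexFn (vertexValue n k p)) (E.edgeFn (edgeValue n k p)) v e := by
  have hμ := hp.vertexValue_strictMono hn
  have heq := hp.eq_of_vertexValue_eq_edgeValue
  constructor
  · rintro ⟨i, hi, hpi⟩
    obtain ⟨v, rfl⟩ := hsurj i hi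
    have hv0 : E.idx v ≠ 0 := by grind
    have hne := (hp.vertexValue_ne_edgeValue_iff hv0).2 hi.2
    refine ⟨v, s(E.parent v, v), (E.isCritVtx_iff heq).2 (.inr hne),
      (E.isCritEdge_parent_iff heq hv0).2 hne, ?_, ?_,
      (E.dies_iff hμ (E.adj_parent v hv0)).2 ⟨hv0, rfl⟩⟩
    · rw [vertexFn, vertexValue_of_mem hi, hpi]
    · rw [E.edgeFn_parent hv0, edgeValue_of_le hi.2, hpi]
  · rintro ⟨v, e, -, he, hc, hd, hdies⟩
    obtain ⟨hv0, rfl⟩ := (E.dies_iff hμ he.1).1 hdies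
    have hvk := (hp.vertexValue_ne_edgeValue_iff hv0).1 ((E.isCritEdge_parent_iff heq hv0).1 he)
    have hi : E.idx v ∈ Icc 1 k := ⟨Nat.one_le_iff_ne_zero.2 hv0, hvk⟩
    rw [vertexFn, vertexValue_of_mem hi] at hc
    rw [E.edgeFn_parent hv0, edgeValue_of_le hvk] at hd
    exact ⟨E.idx v, hi, Prod.ext (by exact_mod_cast hc) (by exact_mod_cast hd)⟩

end ParentEnumeration

theorem stmt_16_general {V : Type*} [Fintype V]
    (T : SimpleGraph V) [DecidableRel T.Adj] (hT : T.IsTree)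
    (n : ℕ) (hn : n = Fintype.card V + T.edgeFinset.card)
    (D : Finset (ℕ × ℕ))
    (hD1 : ∀ p ∈ D, 1 ≤ p.1 ∧ p.2 ≤ n ∧ p.1 < p.2)
    (hD2 : ∀ p ∈ D, ∀ q ∈ D, p ≠ q →
      p.1 ≠ q.1 ∧ p.1 ≠ q.2 ∧ p.2 ≠ q.1 ∧ p.2 ≠ q.2)
    (hDcard : 2 * D.card + 1 ≤ n) :
    ∃ (fv : V → ℝ) (fe : Sym2 V → ℝ), IsDMF T fv fe ∧
      (∀ u : V, 0 ≤ fv u) ∧ (∀ e ∈ T.edgeSet, fe e ≤ (n : ℝ)) ∧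
      (∃ v₀ : V, fv v₀ = 0) ∧
      (∀ x : ℝ, IsCritValue T fv fe x → ∃ j : ℕ, (j : ℝ) = x) ∧
      (∀ c d : ℕ, ((c, d) ∈ D ↔
        ∃ (v : V) (e : Sym2 V), IsCritVtx T fv fe v ∧ IsCritEdge T fv fe e ∧
          fv v = (c : ℝ) ∧ fe e = (d : ℝ) ∧ Dies T fv fe v e)) := by
  obtain ⟨E, hsurj⟩ := hT.exists_parentEnumeration
  obtain ⟨p, hmaps, hsurjD, hmono⟩ := exists_sorted_enumeration D fun a ha b hb h =>
    by_contra fun hab => (hD2 a ha b hb hab).1 h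
  have hp : IsSortedDiagram n D.card p := .of_mapsTo hD1 hD2 hmaps hmono
  have hk : D.card < Fintype.card V := by have := hT.card_edgeFinset; omega
  have hn0 : n ≠ 0 := by omega
  have hμ := hp.vertexValue_strictMono hn0
  obtain ⟨r, hr⟩ := hsurj 0 (by omega)
  refine ⟨E.vertexFn (vertexValue n D.card p), E.edgeFn (edgeValue n D.card p),
    E.isDMF hμ hp.vertexValue_le_edgeValue hp.edgeValue_injOn hp.eq_of_vertexValue_eq_edgeValue,
    fun u => ?_, fun e he => ?_, ⟨r, by simp [ParentEnumeration.vertexFn, hr]⟩,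
    fun x => E.exists_natCast_of_isCritValue hp, fun c d => ?_⟩
  · simpa [ParentEnumeration.vertexFn] using hμ.monotone (Nat.zero_le (E.idx u))
  · obtain ⟨z, hz, rfl⟩ := E.exists_eq_parent_edge he
    exact E.edgeFn_parent hz ▸ hp.edgeValue_le hz
  · rw [← E.exists_critical_dies_iff hp hn0 fun i hi => hsurj i (by grind)]
    exact ⟨fun h => hsurjD h, fun ⟨i, hi, hpi⟩ => hpi ▸ hmaps hi⟩

/-- realization: For any persistence diagram D consistent with a
tree T on n simplices, there is a discrete Morse function f : T → [0,n] whose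
induced persistence diagram is exactly D: the finite (birth, death) pairs of f,
computed from critical vertices and the critical edges that kill them, are
precisely the pairs of D (the essential class (0,∞) being born at the minimum
value 0).  In particular the upper bound on the number of persistence
equivalence classes with m = 2k+1 critical values is attained. -/
theorem stmt_16 {V : Type*} [Fintype V] [Nonempty V] [DecidableEq V]
    (T : SimpleGraph V) [DecidableRel T.Adj] (hT : T.IsTree)
    (n : ℕ) (hn : n = Fintype.card V + T.edgeFinset.card)
    (D : Finset (ℕ × ℕ))
    (hD1 : ∀ p ∈ D, 1 ≤ p.1 ∧ p.2 ≤ n ∧ p.1 < p.2)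
    (hD2 : ∀ p ∈ D, ∀ q ∈ D, p ≠ q →
      p.1 ≠ q.1 ∧ p.1 ≠ q.2 ∧ p.2 ≠ q.1 ∧ p.2 ≠ q.2)
    (hDcard : 2 * D.card + 1 ≤ n) :
    ∃ (fv : V → ℝ) (fe : Sym2 V → ℝ), IsDMF T fv fe ∧
      (∀ u : V, 0 ≤ fv u) ∧ (∀ e ∈ T.edgeSet, fe e ≤ (n : ℝ)) ∧
      (∃ v₀ : V, fv v₀ = 0) ∧
      (∀ x : ℝ, IsCritValue T fv fe x → ∃ j : ℕ, (j : ℝ) = x) ∧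
      (∀ c d : ℕ, ((c, d) ∈ D ↔
        ∃ (v : V) (e : Sym2 V), IsCritVtx T fv fe v ∧ IsCritEdge T fv fe e ∧
          fv v = (c : ℝ) ∧ fe e = (d : ℝ) ∧ Dies T fv fe v e)) :=
  stmt_16_general T hT n hn D hD1 hD2 hDcard
end
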